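/- arXiv:1901.02763 — 3 statements merged into one kernel-verified Lean document; each statement's English description precedes it below -/
import Mathlib

section
/- Let f : ℝ^n → ℝ be twice continuously differentiable and suppose there exists a constant M_{2s} > 0 such that ‖∇f(x) − ∇f(y)‖ ≤ M_{2s}‖x − y‖ and f(x) − f(y) − ⟨∇f(x), x − y⟩ ≤ (M_{2s}/2)‖x − y‖² for all s-sparse x and all y with |supp(x) ∪ supp(y)| ≤ 2s. Let 0 < η < 1/M_{2s} and let x* be an optimal solution of (SCO). Then (i) x* is an η-stationary point of (SCO); (ii) the set P_s(x* − η∇f(x*)) contains exactly one element; consequently x* = P_s(x* − η∇f(x*)). -/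
open Finset Filter Topology

noncomputable section

variable {n : ℕ}

/-- Euclidean space ℝ^n -/
abbrev Euc (n : ℕ) := EuclideanSpace ℝ (Fin n)

/-- support of a vector as a Finset -/
def supp (x : Euc n) : Finset (Fin n) := Finset.univ.filter (fun i => x i ≠ 0)

/-- `x` is `s`-sparse, i.e. `‖x‖₀ ≤ s` -/
def Sparse (s : ℕ) (x : Euc n) : Prop := (supp x).card ≤ s

/-- hard-thresholding operator: the set of best s-sparse approximations of `x` -/
def HardThr (s : ℕ) (x : Euc n) : Set (Euc n) :=
  {z | Sparse s z ∧ ∀ w : Euc n, Sparse s w → ‖x - z‖ ≤ ‖x - w‖}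

/-- Hessian of `f` at `x` as a continuous linear map -/
def hess (f : Euc n → ℝ) (x : Euc n) : Euc n →L[ℝ] Euc n := fderiv ℝ (gradient f) x

/-- `x` is an η-stationary point of (SCO) -/
def EtaStationary (f : Euc n → ℝ) (s : ℕ) (η : ℝ) (x : Euc n) : Prop :=
  x ∈ HardThr s (x - η • gradient f x)

/-- the collection `T(x;η)` of best s-support index sets of `x - η ∇f(x)` -/
def TT (f : Euc n → ℝ) (s : ℕ) (η : ℝ) (x : Euc n) : Set (Finset (Fin n)) :=
  {T | T.card = s ∧ ∃ z ∈ HardThr s (x - η • gradient f x), supp z ⊆ T}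

/-- the map `F_η(x;T)`: gradient entries on `T`, `x` entries on `Tᶜ` -/
def Fmap (f : Euc n → ℝ) (T : Finset (Fin n)) (x : Euc n) : Euc n :=
  WithLp.toLp 2 (fun i => if i ∈ T then gradient f x i else x i)

/-- the point `x^k(α)` of the line search -/
def stepPt (T : Finset (Fin n)) (x d : Euc n) (a : ℝ) : Euc n :=
  WithLp.toLp 2 (fun i => if i ∈ T then x i + a * d i else 0)

/-- `f` is `M`-restricted strongly smooth (`M_{2s}`-RSS) -/
def RSS (f : Euc n → ℝ) (s : ℕ) (M : ℝ) : Prop :=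
  ∀ x y : Euc n, Sparse s x → (supp x ∪ supp y).card ≤ 2 * s →
    (inner ℝ y (hess f x y) : ℝ) ≤ M * ‖y‖ ^ 2

/-- `f` is `m`-restricted strongly convex (`m_{2s}`-RSC) -/
def RSC (f : Euc n → ℝ) (s : ℕ) (m : ℝ) : Prop :=
  ∀ x y : Euc n, Sparse s x → (supp x ∪ supp y).card ≤ 2 * s →
    m * ‖y‖ ^ 2 ≤ (inner ℝ y (hess f x y) : ℝ)

/-- `f` is `m`-restricted strongly convex on a set `U` (e.g. a neighborhood) -/
def RSCOn (f : Euc n → ℝ) (s : ℕ) (m : ℝ) (U : Set (Euc n)) : Prop :=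
  ∀ z ∈ U, Sparse s z → ∀ y : Euc n, (supp z ∪ supp y).card ≤ 2 * s →
    m * ‖y‖ ^ 2 ≤ (inner ℝ y (hess f z y) : ℝ)

/-- norm of the subvector of `v` indexed by `T` -/
def normOn (T : Finset (Fin n)) (v : Euc n) : ℝ := Real.sqrt (∑ i ∈ T, (v i) ^ 2)

/-- `f` is locally restricted Hessian Lipschitz continuous at `xs` with constant `L`:
for all `y, z` in `N_s(xs) = {z : supp xs ⊆ supp z, ‖z‖₀ ≤ s}` and every `T ⊇ supp xs`
with `|T| ≤ s`, the row-submatrix `∇²_{T:}` is `L`-Lipschitz (in operator norm). -/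
def RestrictedHessLip (f : Euc n → ℝ) (s : ℕ) (xs : Euc n) (L : ℝ) : Prop :=
  ∀ T : Finset (Fin n), T.card ≤ s → supp xs ⊆ T →
    ∀ y z : Euc n, supp xs ⊆ supp y → Sparse s y → supp xs ⊆ supp z → Sparse s z →
      ∀ w : Euc n, normOn T (hess f y w - hess f z w) ≤ L * ‖y - z‖ * ‖w‖

/-- the restricted Newton direction: `d_{T^c} = -x_{T^c}` and
`∇²_T f(x) d_T = ∇²_{T,T^c} f(x) x_{T^c} - ∇_T f(x)`
(equivalently `(∇²f(x) d)_T = -∇_T f(x)` given `d_{T^c} = -x_{T^c}`). -/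
def IsNewtonDir (f : Euc n → ℝ) (T : Finset (Fin n)) (x d : Euc n) : Prop :=
  (∀ i ∉ T, d i = -x i) ∧ (∀ i ∈ T, hess f x d i = -(gradient f x) i)

/-- the restricted gradient direction -/
def IsGradDir (f : Euc n → ℝ) (T : Finset (Fin n)) (x d : Euc n) : Prop :=
  (∀ i ∈ T, d i = -(gradient f x) i) ∧ (∀ i ∉ T, d i = -x i)

/-- acceptance condition for the Newton direction:
`⟨∇_T f(x), d_T⟩ ≤ -γ‖d‖² + ‖x_{T^c}‖²/(4η)` -/
def Accept (f : Euc n → ℝ) (γ η : ℝ) (T : Finset (Fin n)) (x d : Euc n) : Prop :=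
  ∑ i ∈ T, gradient f x i * d i ≤ -γ * ‖d‖ ^ 2 + (∑ i ∈ Tᶜ, (x i) ^ 2) / (4 * η)

/-- the search direction of NHTP: Newton direction if it exists and is accepted,
otherwise the restricted gradient direction -/
def SearchDir (f : Euc n → ℝ) (γ η : ℝ) (T : Finset (Fin n)) (x d : Euc n) : Prop :=
  (IsNewtonDir f T x d ∧ Accept f γ η T x d) ∨
  (IsGradDir f T x d ∧ ¬ ∃ dN : Euc n, IsNewtonDir f T x dN ∧ Accept f γ η T x dN)

/-- the Armijo inequality at steplength `a` -/
def ArmijoIneq (f : Euc n → ℝ) (σ : ℝ) (T : Finset (Fin n)) (x d : Euc n) (a : ℝ) : Prop :=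
  f (stepPt T x d a) ≤ f x + σ * a * (inner ℝ (gradient f x) d : ℝ)

/-- `\barα := min{(1-2σ)/(M/γ - σ), 1}` -/
def barAlpha (M γ σ : ℝ) : ℝ := min ((1 - 2 * σ) / (M / γ - σ)) 1

/-- `\barη := min{γ \barα β / M², \barα β, 1/(4M)}` -/
def barEta (M γ σ β : ℝ) : ℝ :=
  min (γ * (barAlpha M γ σ * β) / M ^ 2) (min (barAlpha M γ σ * β) (1 / (4 * M)))

/-- the sequences `(x^k, T_k, d^k, α_k)` are generated by the NHTP algorithm -/
structure NHTP (f : Euc n → ℝ) (s : ℕ) (γ σ β η : ℝ)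
    (x : ℕ → Euc n) (T : ℕ → Finset (Fin n)) (d : ℕ → Euc n) (α : ℕ → ℝ) : Prop where
  sparse0 : Sparse s (x 0)
  mem : ∀ k, T k ∈ TT f s η (x k)
  dir : ∀ k, SearchDir f γ η (T k) (x k) (d k)
  alpha : ∀ k, ∃ ℓ : ℕ, α k = β ^ ℓ ∧ ArmijoIneq f σ (T k) (x k) (d k) (β ^ ℓ) ∧
      ∀ m' < ℓ, ¬ ArmijoIneq f σ (T k) (x k) (d k) (β ^ m')
  update : ∀ k, x (k + 1) = stepPt (T k) (x k) (d k) (α k)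

/-- `x_{(s)}`: the s-th largest absolute value among the entries of `x` -/
def nthAbs (x : Euc n) (s : ℕ) : ℝ :=
  ((Finset.univ.val.map (fun i => |x i|)).sort (· ≤ ·)).getD (n - s) 0

end

/-! For an optimal `xs` and any `z ∈ P_s(xs - η ∇f(xs))`, comparing the distances of `z` and `xs`
to `xs - η ∇f(xs)` gives `‖z - xs‖² ≤ -2η ⟪∇f(xs), z - xs⟫`, while the descent lemma along the
segment `[xs, z]` (whose points are `2s`-sparse together with `xs`) and optimality give
`0 ≤ f z - f xs ≤ ⟪∇f(xs), z - xs⟫ + M/2 ‖z - xs‖²`. Together `(1 - Mη) ‖z - xs‖² ≤ 0`, so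
`z = xs`; since `P_s` is never empty, it is `{xs}`. -/

open scoped InnerProductSpace

section InnerProduct

variable {E : Type*} [NormedAddCommGroup E] [InnerProductSpace ℝ E]

theorem sq_norm_sub_add_inner_nonpos_of_norm_sub_le {x g z : E} {η : ℝ}
    (h : ‖x - η • g - z‖ ≤ ‖x - η • g - x‖) :
    ‖z - x‖ ^ 2 + 2 * η * ⟪g, z - x⟫_ℝ ≤ 0 := by
  have hsq : ‖(x - z) - η • g‖ ^ 2 ≤ ‖η • g‖ ^ 2 := by
    rw [sub_right_comm, sub_sub_cancel_left, norm_neg] at h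
    gcongr
  rw [norm_sub_sq_real, inner_smul_right, norm_sub_rev, real_inner_comm, ← neg_sub z x,
    inner_neg_right] at hsq
  linarith

variable [CompleteSpace E] in
theorem descent_lemma {f : E → ℝ} (hf : Differentiable ℝ f) {M : ℝ} {x v : E}
    (hgrad : ∀ t ∈ Set.Icc (0 : ℝ) 1,
      ‖gradient f x - gradient f (x + t • v)‖ ≤ M * (t * ‖v‖)) :
    f (x + v) ≤ f x + ⟪gradient f x, v⟫_ℝ + M / 2 * ‖v‖ ^ 2 := by
  set ψ : ℝ → ℝ := fun t ↦ f (x + t • v) - t * ⟪gradient f x, v⟫_ℝ - M * ‖v‖ ^ 2 * t ^ 2 / 2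
  have hψ : ∀ t, HasDerivAt ψ
      (⟪gradient f (x + t • v) - gradient f x, v⟫_ℝ - M * ‖v‖ ^ 2 * t) t := by
    intro t
    have hline : HasDerivAt (fun t : ℝ ↦ x + t • v) v t := by
      simpa using ((hasDerivAt_id t).smul_const v).const_add x
    have hfline := ((hf _).hasGradientAt.hasFDerivAt).comp_hasDerivAt t hline
    rw [InnerProductSpace.toDual_apply_apply] at hfline
    refine ((hfline.sub ((hasDerivAt_id t).mul_const ⟪gradient f x, v⟫_ℝ)).sub
      (((hasDerivAt_pow 2 t).const_mul (M * ‖v‖ ^ 2)).div_const 2)).congr_deriv ?_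
    simp only [inner_sub_left]
    ring
  have hanti : AntitoneOn ψ (Set.Icc 0 1) := by
    refine antitoneOn_of_deriv_nonpos (convex_Icc 0 1)
      (fun t _ ↦ (hψ t).continuousAt.continuousWithinAt)
      (fun t _ ↦ (hψ t).differentiableAt.differentiableWithinAt) fun t ht ↦ ?_
    rw [interior_Icc] at ht
    rw [(hψ t).deriv, sub_nonpos]
    calc ⟪gradient f (x + t • v) - gradient f x, v⟫_ℝ
        ≤ ‖gradient f x - gradient f (x + t • v)‖ * ‖v‖ := by
          rw [norm_sub_rev]; exact real_inner_le_norm _ _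
      _ ≤ M * (t * ‖v‖) * ‖v‖ := by gcongr; exact hgrad t (Set.Ioo_subset_Icc_self ht)
      _ = M * ‖v‖ ^ 2 * t := by ring
  have h01 : ψ 1 ≤ ψ 0 := hanti (by simp) (by simp) zero_le_one
  simp only [ψ, one_smul, zero_smul, add_zero] at h01
  linarith

end InnerProduct

section Sparse

variable {n : ℕ}

@[simp]
theorem mem_supp {x : Euc n} {i : Fin n} : i ∈ supp x ↔ x i ≠ 0 := by
  simp [supp]

theorem supp_add_smul_sub_subset (x z : Euc n) (t : ℝ) :
    supp (x + t • (z - x)) ⊆ supp x ∪ supp z := by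
  intro i
  contrapose!
  simp_all

theorem card_supp_union_le_of_sparse {s : ℕ} {x y : Euc n} (hx : Sparse s x) (hy : Sparse s y) :
    (supp x ∪ supp y).card ≤ 2 * s :=
  (card_union_le _ _).trans (by unfold Sparse at hx hy; omega)

theorem isClosed_setOf_sparse (s : ℕ) : IsClosed {x : Euc n | Sparse s x} := by
  rw [← isOpen_compl_iff, isOpen_iff_forall_mem_open]
  intro x hx
  refine ⟨⋂ i ∈ supp x, {y | y i ≠ 0}, fun y hy ↦ ?_,
    isOpen_biInter_finset fun i _ ↦ isOpen_ne_fun (by fun_prop) continuous_const, ?_⟩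
  · have hsub : supp x ⊆ supp y := fun i hi ↦ mem_supp.2 (Set.mem_iInter₂.1 hy i hi)
    simp only [Set.mem_compl_iff, Set.mem_ofPred_eq, Sparse, not_le] at hx ⊢
    exact hx.trans_le (card_le_card hsub)
  · simp

theorem hardThr_nonempty (s : ℕ) (u : Euc n) : (HardThr s u).Nonempty := by
  have hzero : Sparse s (0 : Euc n) := by simp [Sparse, supp]
  obtain ⟨z, hz, hdist⟩ := (isClosed_setOf_sparse s).exists_infDist_eq_dist ⟨0, hzero⟩ u
  refine ⟨z, hz, fun w hw ↦ ?_⟩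
  rw [← dist_eq_norm, ← dist_eq_norm, ← hdist]
  exact Metric.infDist_le_dist_of_mem hw

theorem eq_of_mem_hardThr_of_optimal {s : ℕ} {f : Euc n → ℝ} (hf : Differentiable ℝ f) {M : ℝ}
    (hM : 0 < M)
    (hlip : ∀ x y : Euc n, Sparse s x → (supp x ∪ supp y).card ≤ 2 * s →
      ‖gradient f x - gradient f y‖ ≤ M * ‖x - y‖)
    {η : ℝ} (hη : 0 < η) (hηM : η < 1 / M)
    {xs : Euc n} (hxs : Sparse s xs) (hopt : ∀ x : Euc n, Sparse s x → f xs ≤ f x)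
    {z : Euc n} (hz : z ∈ HardThr s (xs - η • gradient f xs)) : z = xs := by
  obtain ⟨hzs, hzmin⟩ := hz
  have hprox := sq_norm_sub_add_inner_nonpos_of_norm_sub_le (hzmin xs hxs)
  have hdescent : f z ≤ f xs + ⟪gradient f xs, z - xs⟫_ℝ + M / 2 * ‖z - xs‖ ^ 2 := by
    have := descent_lemma (x := xs) (v := z - xs) hf fun t ht ↦ by
      have hcard : (supp xs ∪ supp (xs + t • (z - xs))).card ≤ 2 * s :=
        (card_le_card (union_subset subset_union_left (supp_add_smul_sub_subset xs z t))).trans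
          (card_supp_union_le_of_sparse hxs hzs)
      simpa [norm_smul, abs_of_nonneg ht.1] using hlip _ _ hxs hcard
    rwa [add_sub_cancel] at this
  have hMη : M * η < 1 := by rwa [lt_div_iff₀ hM, mul_comm] at hηM
  have hsq : ‖z - xs‖ ^ 2 ≤ 0 := by nlinarith [hopt z hzs, sq_nonneg ‖z - xs‖]
  rw [← sub_eq_zero, ← norm_eq_zero]
  exact pow_eq_zero_iff two_ne_zero |>.1 (le_antisymm hsq (sq_nonneg _))

end Sparse

theorem stmt_0_general {n s : ℕ} (f : Euc n → ℝ) (hf : ContDiff ℝ 2 f)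
    (M : ℝ) (hM : 0 < M)
    (hlip : ∀ x y : Euc n, Sparse s x → (supp x ∪ supp y).card ≤ 2 * s →
      ‖gradient f x - gradient f y‖ ≤ M * ‖x - y‖ ∧
      f x - f y - (inner ℝ (gradient f x) (x - y) : ℝ) ≤ M / 2 * ‖x - y‖ ^ 2)
    (η : ℝ) (hη : 0 < η) (hηM : η < 1 / M)
    (xs : Euc n) (hxs : Sparse s xs) (hopt : ∀ x : Euc n, Sparse s x → f xs ≤ f x) :
    EtaStationary f s η xs ∧ HardThr s (xs - η • gradient f xs) = {xs} := by
  have hsingleton : HardThr s (xs - η • gradient f xs) = {xs} :=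
    Set.eq_singleton_iff_nonempty_unique_mem.2 ⟨hardThr_nonempty s _, fun _ hz ↦
      eq_of_mem_hardThr_of_optimal (hf.differentiable two_ne_zero) hM
        (fun x y hx hxy ↦ (hlip x y hx hxy).1) hη hηM hxs hopt hz⟩
  exact ⟨show xs ∈ _ from hsingleton ▸ rfl, hsingleton⟩

/-- Theorem 1, existence of η-stationary points, Beck–Eldar:
under the restricted Lipschitz-type conditions with constant `M > 0` and `0 < η < 1/M`,
any optimal solution `xs` of (SCO) is an η-stationary point, and
`P_s(xs - η ∇f(xs))` is exactly the singleton `{xs}`. -/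
theorem stmt_0 {n s : ℕ} (hs : 1 ≤ s) (f : Euc n → ℝ) (hf : ContDiff ℝ 2 f)
    (M : ℝ) (hM : 0 < M)
    (hlip : ∀ x y : Euc n, Sparse s x → (supp x ∪ supp y).card ≤ 2 * s →
      ‖gradient f x - gradient f y‖ ≤ M * ‖x - y‖ ∧
      f x - f y - (inner ℝ (gradient f x) (x - y) : ℝ) ≤ M / 2 * ‖x - y‖ ^ 2)
    (η : ℝ) (hη : 0 < η) (hηM : η < 1 / M)
    (xs : Euc n) (hxs : Sparse s xs) (hopt : ∀ x : Euc n, Sparse s x → f xs ≤ f x) :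
    EtaStationary f s η xs ∧ HardThr s (xs - η • gradient f xs) = {xs} :=
  stmt_0_general f hf M hM hlip η hη hηM xs hxs hopt
end

section
/- Let η > 0, let T ∈ T(x;η), and suppose F_η(x;T) = 0. Then η|∇_i f(x)| ≤ x_{(s)} for every i ∈ T^c, where x_{(s)} is the s-th largest absolute value among the entries of x. -/
open Finset Filter Topology

/-!
Put `u = x - η ∇f(x)` and let `z ∈ P_s(u)` with `supp z ⊆ T`. Since `F_η(x;T) = 0`, `u` agrees
with `x` on `T` and with `-η ∇f(x)` off `T`. If some `i ∉ T` had `|u_i| > |u_j|` for a `j ∈ T`,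
then moving the support of `z` from `j` to `i` (keeping `u_i` there) would give a better
`s`-sparse approximation of `u`. Hence `η |∇_i f(x)|` is at most each of the `s` numbers `|x_j|`,
`j ∈ T`, and so at most the `s`-th largest absolute entry of `x`.
-/

lemma Finset.card_insert_erase_le_of_subset {α : Type*} [DecidableEq α] {A T : Finset α}
    (hAT : A ⊆ T) {j : α} (hj : j ∈ T) (i : α) : (insert i (A.erase j)).card ≤ T.card :=
  calc (insert i (A.erase j)).card ≤ (A.erase j).card + 1 := card_insert_le _ _
    _ ≤ (T.erase j).card + 1 := by gcongr
    _ = T.card := card_erase_add_one hj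

lemma abs_le_abs_of_mem_hardThr {n s : ℕ} {u z : Euc n} (hz : z ∈ HardThr s u)
    {T : Finset (Fin n)} (hzT : supp z ⊆ T) (hT : T.card ≤ s) {i j : Fin n}
    (hi : i ∉ T) (hj : j ∈ T) : |u i| ≤ |u j| := by
  classical
  have hij : i ≠ j := fun h => hi (h ▸ hj)
  have hzi : z i = 0 := by
    by_contra h
    exact hi (hzT (by simp [supp, h]))
  set w : Euc n := WithLp.toLp 2 (Function.update (Function.update z.ofLp j 0) i (u i))
  have hw_sparse : Sparse s w := by
    have hsupp : supp w ⊆ insert i ((supp z).erase j) := by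
      intro k hk
      by_cases hki : k = i
      · simp [hki]
      · have hkj : k ≠ j := by rintro rfl; simp [supp, w, hki] at hk
        simp_all [supp, w]
    exact ((card_le_card hsupp).trans
      (Finset.card_insert_erase_le_of_subset hzT hj i)).trans hT
  have hsq : ‖u - z‖ ^ 2 ≤ ‖u - w‖ ^ 2 := by
    gcongr
    exact hz.2 w hw_sparse
  have hdiff : ‖u - w‖ ^ 2 - ‖u - z‖ ^ 2 = (u j) ^ 2 - (u i) ^ 2 - (u j - z j) ^ 2 := by
    simp only [EuclideanSpace.norm_sq_eq, Real.norm_eq_abs, sq_abs, ← Finset.sum_sub_distrib]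
    rw [Fintype.sum_eq_add i j hij]
    · simp [w, hij.symm, hzi]; ring
    · rintro k ⟨hki, hkj⟩
      simp [w, hki, hkj]
  exact sq_le_sq.mp (by nlinarith [sq_nonneg (u j - z j)])

lemma List.le_getD_of_countP_lt_le {l : List ℝ} (hl : l.Pairwise (· ≤ ·)) {k : ℕ}
    (hk : k < l.length) {m : ℝ} (hc : l.countP (fun a => decide (a < m)) ≤ k) :
    m ≤ l.getD k 0 := by
  rw [List.getD_eq_getElem l 0 hk]
  by_contra! hlt
  -- sortedness puts the first `k + 1` entries below `l[k] < m`
  have hprefix : (l.take (k + 1)).countP (fun a => decide (a < m)) = k + 1 := by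
    rw [List.countP_eq_length.2, List.length_take]
    · omega
    intro a ha
    obtain ⟨p, hp, rfl⟩ := List.mem_take_iff_getElem.1 ha
    have : l[p] ≤ l[k] := hl.rel_get_of_le (a := ⟨p, by omega⟩) (b := ⟨k, hk⟩)
      (Fin.mk_le_mk.2 (by omega))
    simpa using this.trans_lt hlt
  have hsplit := List.countP_append (p := fun a => decide (a < m)) (l₁ := l.take (k + 1))
    (l₂ := l.drop (k + 1))
  rw [List.take_append_drop] at hsplit
  omega

lemma le_nthAbs {n s : ℕ} (hs : 1 ≤ s) (x : Euc n) {T : Finset (Fin n)} (hT : T.card = s)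
    {m : ℝ} (hm : ∀ j ∈ T, m ≤ |x j|) : m ≤ nthAbs x s := by
  classical
  have hsn : s ≤ n := hT ▸ (card_le_univ T).trans_eq (Fintype.card_fin n)
  set M := Finset.univ.val.map (fun i : Fin n => |x i|)
  have hbelow : (univ.filter fun j : Fin n => |x j| < m) ⊆ Tᶜ := by
    intro j hj
    simp only [mem_filter, mem_univ, true_and] at hj
    exact mem_compl.2 fun hjT => (hm j hjT).not_gt hj
  have hcount : (M.sort (· ≤ ·)).countP (fun a => decide (a < m)) ≤ n - s := by
    rw [← Multiset.coe_countP, Multiset.sort_eq, Multiset.countP_map]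
    calc _ = (univ.filter fun j : Fin n => |x j| < m).card := rfl
      _ ≤ Tᶜ.card := card_le_card hbelow
      _ = n - s := by rw [card_compl, hT, Fintype.card_fin]
  exact List.le_getD_of_countP_lt_le (Multiset.pairwise_sort _ _) (by simp; omega) hcount

theorem stmt_3_general {n s : ℕ} (hs : 1 ≤ s) (f : Euc n → ℝ)
    (η : ℝ) (hη : 0 < η) (x : Euc n) (T : Finset (Fin n))
    (hT : T ∈ TT f s η x) (hF : Fmap f T x = 0) :
    ∀ i ∉ T, η * |gradient f x i| ≤ nthAbs x s := by
  intro i hi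
  obtain ⟨hTcard, z, hz, hzT⟩ := hT
  have hFk : ∀ k, (if k ∈ T then gradient f x k else x k) = 0 := fun k =>
    congrArg (fun v : Euc n => v k) hF
  have hgrad : ∀ j ∈ T, gradient f x j = 0 := fun j hj => by simpa [hj] using hFk j
  have hx : x i = 0 := by simpa [hi] using hFk i
  refine le_nthAbs hs x hTcard fun j hj => ?_
  have := abs_le_abs_of_mem_hardThr hz hzT hTcard.le hi hj
  simpa [hx, hgrad j hj, abs_mul, abs_of_pos hη] using this

/-- Remark 4(ii): if `T ∈ T(x;η)` and `F_η(x;T) = 0`, then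
`η|∇_i f(x)| ≤ x_{(s)}` for every `i ∈ T^c`. -/
theorem stmt_3 {n s : ℕ} (hs : 1 ≤ s) (f : Euc n → ℝ) (hf : ContDiff ℝ 2 f)
    (η : ℝ) (hη : 0 < η) (x : Euc n) (T : Finset (Fin n))
    (hT : T ∈ TT f s η x) (hF : Fmap f T x = 0) :
    ∀ i ∉ T, η * |gradient f x i| ≤ nthAbs x s :=
  stmt_3_general hs f η hη x T hT hF
end

section
/- Suppose f is m_{2s}-restricted strongly convex and M_{2s}-restricted strongly smooth, and let x^k be an s-sparse point with T_k ∈ T(x^k;η). Given constants γ ≤ m_{2s} and step-size η ≤ 1/(4M_{2s}), the restricted Newton direction d^k_N satisfies ⟨∇_{T_k} f(x^k), (d^k_N)_{T_k}⟩ ≤ −γ‖d^k_N‖² + ‖x^k_{T_k^c}‖²/(4η). -/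
open Finset Filter Topology

/-!
Split the Newton direction as `d = u + v` with `u = d_T` and `v = d_{Tᶜ} = -x_{Tᶜ}`. The Newton
equation turns `⟨∇_T f(x), d_T⟩` into `-⟨u, H d⟩`, `H = ∇²f(x)`, and symmetry of `H` gives
`2⟨u, H d⟩ = ⟨d, H d⟩ + ⟨u, H u⟩ - ⟨v, H v⟩`. All three vectors are supported in `supp x ∪ T`, of
size at most `2s`, so RSC and RSS bound this below by `2m‖d‖² - 2M‖v‖²`; finally `γ ≤ m`,
`‖v‖² = ‖x_{Tᶜ}‖²` and `M ≤ 1/(4η)`.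
-/

open scoped RealInnerProductSpace

theorem IsSymmSndFDerivAt.isSymmetric_fderiv_gradient {E : Type*} [NormedAddCommGroup E]
    [InnerProductSpace ℝ E] [CompleteSpace E] {f : E → ℝ} {x : E}
    (hf : IsSymmSndFDerivAt ℝ f x) :
    ((fderiv ℝ (gradient f) x : E →L[ℝ] E) : E →ₗ[ℝ] E).IsSymmetric := by
  set iso : StrongDual ℝ E ≃ₗᵢ[ℝ] E := (InnerProductSpace.toDual ℝ E).symm
  have hfderiv : fderiv ℝ (gradient f) x = (iso : StrongDual ℝ E →L[ℝ] E).comp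
      (fderiv ℝ (fderiv ℝ f) x) := by
    rw [show gradient f = iso ∘ fderiv ℝ f from rfl, LinearIsometryEquiv.comp_fderiv]
  have inner_eq (u v : E) : ⟪fderiv ℝ (gradient f) x u, v⟫ = fderiv ℝ (fderiv ℝ f) x u v := by
    rw [hfderiv]
    exact InnerProductSpace.toDual_symm_apply
  intro u v
  simp only [ContinuousLinearMap.coe_coe]
  rw [inner_eq, real_inner_comm, inner_eq, hf u v]

theorem LinearMap.IsSymmetric.neg_inner_add_le {E : Type*} [NormedAddCommGroup E]
    [InnerProductSpace ℝ E] {H : E →ₗ[ℝ] E} (hH : H.IsSymmetric) {m M : ℝ} {u v : E}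
    (huv : ⟪u, v⟫ = 0) (hu : m * ‖u‖ ^ 2 ≤ ⟪u, H u⟫)
    (huv_low : m * ‖u + v‖ ^ 2 ≤ ⟪u + v, H (u + v)⟫)
    (hv_low : m * ‖v‖ ^ 2 ≤ ⟪v, H v⟫) (hv_up : ⟪v, H v⟫ ≤ M * ‖v‖ ^ 2) :
    -⟪u, H (u + v)⟫ ≤ -m * ‖u + v‖ ^ 2 + M * ‖v‖ ^ 2 := by
  have hpolar : 2 * ⟪u, H (u + v)⟫ = ⟪u + v, H (u + v)⟫ + ⟪u, H u⟫ - ⟪v, H v⟫ := by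
    have hvu : ⟪v, H u⟫ = ⟪u, H v⟫ := (real_inner_comm _ _).trans (hH u v)
    simp only [map_add, inner_add_left, inner_add_right, hvu]
    ring
  have hpyth : m * ‖u + v‖ ^ 2 = m * ‖u‖ ^ 2 + m * ‖v‖ ^ 2 := by
    rw [norm_add_sq_real, huv]
    ring
  linarith

namespace Euc

variable {n : ℕ}

def restrictTo (T : Finset (Fin n)) (v : Euc n) : Euc n :=
  WithLp.toLp 2 (fun i => if i ∈ T then v i else 0)

theorem restrictTo_apply (T : Finset (Fin n)) (v : Euc n) (i : Fin n) :
    restrictTo T v i = if i ∈ T then v i else 0 := rfl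

theorem restrictTo_add_restrictTo_compl (T : Finset (Fin n)) (v : Euc n) :
    restrictTo T v + restrictTo Tᶜ v = v := by
  ext i
  by_cases hi : i ∈ T <;> simp [restrictTo_apply, hi]

theorem inner_restrictTo_left (T : Finset (Fin n)) (u v : Euc n) :
    ⟪restrictTo T u, v⟫ = ∑ i ∈ T, u i * v i := by
  simp [PiLp.inner_apply, restrictTo_apply, mul_comm, Finset.sum_ite_mem]

theorem norm_restrictTo_sq (T : Finset (Fin n)) (v : Euc n) :
    ‖restrictTo T v‖ ^ 2 = ∑ i ∈ T, v i ^ 2 := by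
  rw [← real_inner_self_eq_norm_sq, inner_restrictTo_left]
  simp [restrictTo_apply, sq]

theorem inner_restrictTo_restrictTo_compl (T : Finset (Fin n)) (u v : Euc n) :
    ⟪restrictTo T u, restrictTo Tᶜ v⟫ = 0 := by
  rw [inner_restrictTo_left]
  exact Finset.sum_eq_zero fun i hi => by simp [restrictTo_apply, hi]

theorem supp_restrictTo_subset (T : Finset (Fin n)) (v : Euc n) :
    supp (restrictTo T v) ⊆ supp v := by
  intro i
  simp only [supp, restrictTo_apply, Finset.mem_filter, Finset.mem_univ, true_and]
  split_ifs <;> simp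

end Euc

open Euc

variable {n : ℕ}

theorem IsNewtonDir.supp_subset {f : Euc n → ℝ} {T : Finset (Fin n)} {x d : Euc n}
    (hd : IsNewtonDir f T x d) : supp d ⊆ supp x ∪ T := by
  intro i hi
  by_cases hiT : i ∈ T
  · exact Finset.mem_union_right _ hiT
  · simp_all [supp, hd.1 i hiT]

theorem IsNewtonDir.sum_gradient_mul_eq {f : Euc n → ℝ} {T : Finset (Fin n)} {x d : Euc n}
    (hd : IsNewtonDir f T x d) :
    ∑ i ∈ T, gradient f x i * d i = -⟪restrictTo T d, hess f x d⟫ := by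
  rw [inner_restrictTo_left, ← Finset.sum_neg_distrib]
  refine Finset.sum_congr rfl fun i hi => ?_
  rw [hd.2 i hi]
  ring

theorem card_supp_union_le {s : ℕ} {x y : Euc n} {T : Finset (Fin n)} (hx : Sparse s x)
    (hT : T.card ≤ s) (hy : supp y ⊆ supp x ∪ T) : (supp x ∪ supp y).card ≤ 2 * s :=
  calc (supp x ∪ supp y).card ≤ (supp x ∪ T).card :=
        Finset.card_le_card (Finset.union_subset Finset.subset_union_left hy)
    _ ≤ (supp x).card + T.card := Finset.card_union_le _ _
    _ ≤ 2 * s := by unfold Sparse at hx; omega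

theorem mul_le_div_four_mul {M η S : ℝ} (hη : 0 < η) (hηM : η ≤ 1 / (4 * M)) (hS : 0 ≤ S) :
    M * S ≤ S / (4 * η) := by
  have h4ηM : 4 * η * M ≤ 1 := by
    rcases le_or_gt M 0 with hM | hM
    · nlinarith
    · rw [le_div_iff₀ (by positivity)] at hηM
      linarith
  rw [le_div_iff₀ (by positivity)]
  nlinarith

theorem stmt_4_general {n s : ℕ} (f : Euc n → ℝ) (hf : ContDiff ℝ 2 f)
    (m M : ℝ) (hRSC : RSC f s m) (hRSS : RSS f s M)
    (γ η : ℝ) (hγ : γ ≤ m) (hη : 0 < η) (hηM : η ≤ 1 / (4 * M))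
    (x : Euc n) (hx : Sparse s x) (T : Finset (Fin n)) (hT : T ∈ TT f s η x)
    (d : Euc n) (hd : IsNewtonDir f T x d) :
    ∑ i ∈ T, gradient f x i * d i
      ≤ -γ * ‖d‖ ^ 2 + (∑ i ∈ Tᶜ, (x i) ^ 2) / (4 * η) := by
  have hH : ((hess f x : Euc n →L[ℝ] Euc n) : Euc n →ₗ[ℝ] Euc n).IsSymmetric :=
    (hf.contDiffAt.isSymmSndFDerivAt (by simp [minSmoothness_of_isRCLikeNormedField])
      ).isSymmetric_fderiv_gradient
  have hcard {y : Euc n} (hy : supp y ⊆ supp d) : (supp x ∪ supp y).card ≤ 2 * s :=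
    card_supp_union_le hx hT.1.le (hy.trans hd.supp_subset)
  set u := restrictTo T d
  set v := restrictTo Tᶜ d
  have hd_eq : u + v = d := restrictTo_add_restrictTo_compl T d
  have hv : ‖v‖ ^ 2 = ∑ i ∈ Tᶜ, x i ^ 2 := by
    rw [norm_restrictTo_sq]
    exact Finset.sum_congr rfl fun i hi => by rw [hd.1 i (Finset.mem_compl.mp hi), neg_sq]
  have key := hH.neg_inner_add_le (inner_restrictTo_restrictTo_compl T d d)
    (hRSC x u hx (hcard (supp_restrictTo_subset T d)))
    (by rw [hd_eq]; exact hRSC x d hx (hcard subset_rfl))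
    (hRSC x v hx (hcard (supp_restrictTo_subset Tᶜ d)))
    (hRSS x v hx (hcard (supp_restrictTo_subset Tᶜ d)))
  rw [hd_eq, hv, ContinuousLinearMap.coe_coe] at key
  rw [hd.sum_gradient_mul_eq]
  have hS : M * ∑ i ∈ Tᶜ, x i ^ 2 ≤ (∑ i ∈ Tᶜ, x i ^ 2) / (4 * η) :=
    mul_le_div_four_mul hη hηM (by positivity)
  linarith [mul_le_mul_of_nonneg_right hγ (sq_nonneg ‖d‖)]

/-- Lemma "Descent inequality of the Newton direction":
if `f` is `m`-RSC and `M`-RSS, `γ ≤ m` and `0 < η ≤ 1/(4M)`, then the restricted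
Newton direction `d` at an s-sparse `x` with `T ∈ T(x;η)` satisfies
`⟨∇_T f(x), d_T⟩ ≤ -γ‖d‖² + ‖x_{T^c}‖²/(4η)`. -/
theorem stmt_4 {n s : ℕ} (hs : 1 ≤ s) (f : Euc n → ℝ) (hf : ContDiff ℝ 2 f)
    (m M : ℝ) (hm : 0 < m) (hM : 0 < M) (hRSC : RSC f s m) (hRSS : RSS f s M)
    (γ η : ℝ) (hγ : γ ≤ m) (hη : 0 < η) (hηM : η ≤ 1 / (4 * M))
    (x : Euc n) (hx : Sparse s x) (T : Finset (Fin n)) (hT : T ∈ TT f s η x)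
    (d : Euc n) (hd : IsNewtonDir f T x d) :
    ∑ i ∈ T, gradient f x i * d i
      ≤ -γ * ‖d‖ ^ 2 + (∑ i ∈ Tᶜ, (x i) ^ 2) / (4 * η) :=
  stmt_4_general f hf m M hRSC hRSS γ η hγ hη hηM x hx T hT d hd
end
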